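/- arXiv:0807.4976 — 3 statements merged into one kernel-verified Lean document; each statement's English description precedes it below -/
import Mathlib

section
/- Let I be a homogeneous ideal of R = k[x_0,...,x_N] that is generated by elements of degree at most d, and suppose the point q = (1,0,...,0) lies in the zero set of I (equivalently, I contains no polynomial with a nonzero x_0^m term for any m). Then the chain of partial elimination ideals stabilizes at step d−1: K_{d-1}(I) = K_i(I) for all i ≥ d−1. -/
open MvPolynomial

/-- The inclusion `S = k[x_1,…,x_N] → R = k[x_0,…,x_N]` sending the `j`-th variable of `S`
to the `(j+1)`-st variable of `R` (so that `R` has the extra variable `x_0`). -/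
noncomputable def emb (k : Type) [Field k] (N : ℕ) :
    MvPolynomial (Fin N) k →ₐ[k] MvPolynomial (Fin (N + 1)) k :=
  rename Fin.succ

/-- The `i`-th partial elimination set of a homogeneous ideal `I ⊆ R`:
`0` together with all `f̄ ∈ S` such that `x_0^i·f̄ + g ∈ I` for some `g` with
`x_0`-degree `< i` (for `i = 0` this means `f̄ ∈ I ∩ S`, taking `g = 0`). -/
def Kset {k : Type} [Field k] {N : ℕ} (I : Ideal (MvPolynomial (Fin (N + 1)) k)) (i : ℕ) :
    Set (MvPolynomial (Fin N) k) :=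
  {f | ∃ g : MvPolynomial (Fin (N + 1)) k,
    (g = 0 ∨ g.degreeOf 0 < i) ∧ X 0 ^ i * emb k N f + g ∈ I}

section Aux

variable {k : Type} [Field k] {N : ℕ}

/-- `finSuccEquiv` sends the embedded copy of `S` to the constants of `S[X]`. -/
lemma finSuccEquiv_emb (f : MvPolynomial (Fin N) k) :
    finSuccEquiv k N (emb k N f) = Polynomial.C f := by
  induction f using MvPolynomial.induction_on with
  | C a => simp [emb, finSuccEquiv_apply, algebraMap_eq]
  | add p q hp hq => simp only [emb] at *; rw [map_add, map_add, hp, hq, map_add]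
  | mul_X p j hp =>
      simp only [emb] at *
      rw [map_mul, map_mul, rename_X, hp, finSuccEquiv_X_succ, map_mul]

/-- A homogeneous element of `I` of degree `n ≤ d` has `x₀`-degree at most `d - 1`,
given that `I` contains no pure powers of `x₀`. -/
lemma gen_degreeOf_le {d n : ℕ} (hd : 1 ≤ d) (hn : n ≤ d)
    (g : MvPolynomial (Fin (N + 1)) k) (hg : g.IsHomogeneous n)
    (h0 : ∀ m : ℕ, coeff (Finsupp.single (0 : Fin (N + 1)) m) g = 0) :
    g.degreeOf 0 ≤ d - 1 := by
  rw [degreeOf_le_iff]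
  intro s hs
  have hc : coeff s g ≠ 0 := mem_support_iff.mp hs
  have hdeg : s.degree = n := by
    by_contra h
    exact hc (hg.coeff_eq_zero h)
  have h1 : s 0 ≤ n := hdeg ▸ Finsupp.le_degree 0 s
  by_contra hcon
  push_neg at hcon
  have hs0 : s 0 = n := by omega
  have hzero : ∀ j : Fin (N + 1), j ≠ 0 → s j = 0 := by
    intro j hj
    by_contra hjne
    have h0mem : (0 : Fin (N + 1)) ∈ s.support := by
      rw [Finsupp.mem_support_iff, hs0]; omega
    have hjmem : j ∈ s.support := Finsupp.mem_support_iff.mpr hjne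
    have hsub : ({0, j} : Finset (Fin (N + 1))) ⊆ s.support := by
      intro t ht
      rcases Finset.mem_insert.mp ht with rfl | ht
      · exact h0mem
      · rw [Finset.mem_singleton] at ht; exact ht ▸ hjmem
    have hsum : s 0 + s j ≤ ∑ t ∈ s.support, s t := by
      have := Finset.sum_le_sum_of_subset hsub (f := fun t => s t)
      rwa [Finset.sum_insert (by simpa using (Ne.symm hj)), Finset.sum_singleton] at this
    have : s.degree = ∑ t ∈ s.support, s t := rfl
    omega
  have hsingle : s = Finsupp.single (0 : Fin (N + 1)) n := by
    ext t
    by_cases ht : t = 0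
    · subst ht; simp [hs0]
    · rw [hzero t ht, Finsupp.single_apply]
      simp [Ne.symm ht]
  exact hc (hsingle ▸ h0 n)

/-- Multiplicative stability for the key decomposition. -/
lemma key_mul (I : Ideal (MvPolynomial (Fin (N + 1)) k)) (d : ℕ)
    (F : MvPolynomial (Fin (N + 1)) k) (hF : F ∈ I)
    (h : ∃ P ∈ I, (F - X 0 * P).degreeOf 0 ≤ d - 1)
    (r : MvPolynomial (Fin (N + 1)) k) :
    ∃ P ∈ I, (r * F - X 0 * P).degreeOf 0 ≤ d - 1 := by
  induction r using MvPolynomial.induction_on with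
  | C a =>
      obtain ⟨P, hPI, hPd⟩ := h
      refine ⟨C a * P, I.mul_mem_left _ hPI, ?_⟩
      have hid : C a * F - X 0 * (C a * P) = C a * (F - X 0 * P) := by ring
      rw [hid]
      exact (degreeOf_C_mul_le _ _ _).trans hPd
  | add p q hp hq =>
      obtain ⟨P1, h1, hd1⟩ := hp
      obtain ⟨P2, h2, hd2⟩ := hq
      refine ⟨P1 + P2, I.add_mem h1 h2, ?_⟩
      have hid : (p + q) * F - X 0 * (P1 + P2)
          = (p * F - X 0 * P1) + (q * F - X 0 * P2) := by ring
      rw [hid]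
      exact (degreeOf_add_le _ _ _).trans (max_le hd1 hd2)
  | mul_X p j hp =>
      obtain ⟨P, hPI, hPd⟩ := hp
      by_cases hj : j = 0
      · subst hj
        refine ⟨p * F, I.mul_mem_left _ hF, ?_⟩
        have hid : p * X 0 * F - X 0 * (p * F) = 0 := by ring
        rw [hid, degreeOf_zero]
        exact Nat.zero_le _
      · refine ⟨X j * P, I.mul_mem_left _ hPI, ?_⟩
        have hid : p * X j * F - X 0 * (X j * P) = (p * F - X 0 * P) * X j := by ring
        rw [hid, degreeOf_mul_X_of_ne _ (Ne.symm hj)]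
        exact hPd

/-- **Key lemma.** Every `F ∈ I` can be written `F = x₀·P + Q` with `P ∈ I` and
`Q` of `x₀`-degree at most `d - 1`. -/
lemma key_decomp (I : Ideal (MvPolynomial (Fin (N + 1)) k)) (d : ℕ) (hd : 1 ≤ d)
    (G : Set (MvPolynomial (Fin (N + 1)) k)) (hGI : I = Ideal.span G)
    (hGdeg : ∀ g ∈ G, ∃ n ≤ d, g.IsHomogeneous n)
    (hq : ∀ f ∈ I, ∀ m : ℕ, coeff (Finsupp.single (0 : Fin (N + 1)) m) f = 0) :
    ∀ F ∈ I, ∃ P ∈ I, (F - X 0 * P).degreeOf 0 ≤ d - 1 := by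
  intro F hF
  subst hGI
  induction hF using Submodule.span_induction with
  | mem x hx =>
      refine ⟨0, Ideal.zero_mem _, ?_⟩
      rw [mul_zero, sub_zero]
      obtain ⟨n, hn, hhom⟩ := hGdeg x hx
      exact gen_degreeOf_le hd hn x hhom (hq x (Ideal.subset_span hx))
  | zero =>
      exact ⟨0, Ideal.zero_mem _, by simp⟩
  | add x y hx hy hpx hpy =>
      obtain ⟨P1, h1, hd1⟩ := hpx
      obtain ⟨P2, h2, hd2⟩ := hpy
      refine ⟨P1 + P2, Ideal.add_mem _ h1 h2, ?_⟩
      have hid : x + y - X 0 * (P1 + P2) = (x - X 0 * P1) + (y - X 0 * P2) := by ring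
      rw [hid]
      exact (degreeOf_add_le _ _ _).trans (max_le hd1 hd2)
  | smul a x hx hpx =>
      rw [smul_eq_mul]
      exact key_mul _ d x hx hpx a

/-- Monotonicity: `Kset I i ⊆ Kset I j` for `i ≤ j`. -/
lemma Kset_mono (I : Ideal (MvPolynomial (Fin (N + 1)) k)) {i j : ℕ} (hij : i ≤ j) :
    Kset I i ⊆ Kset I j := by
  obtain ⟨m, rfl⟩ : ∃ m, j = m + i := ⟨j - i, by omega⟩
  rintro f ⟨g, hg, hmem⟩
  by_cases hg0 : g = 0
  · subst hg0
    refine ⟨0, Or.inl rfl, ?_⟩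
    have hid : X 0 ^ (m + i) * emb k N f + 0 = X 0 ^ m * (X 0 ^ i * emb k N f + 0) := by
      rw [pow_add]; ring
    rw [hid]
    exact Ideal.mul_mem_left _ _ hmem
  · have hdg : g.degreeOf 0 < i := by
      rcases hg with h | h
      · exact absurd h hg0
      · exact h
    refine ⟨X 0 ^ m * g, Or.inr ?_, ?_⟩
    · -- degreeOf 0 (X 0 ^ m * g) = m + degreeOf 0 g < m + i
      have heg : finSuccEquiv k N g ≠ 0 := by
        intro h
        exact hg0 ((finSuccEquiv k N).injective (by rw [h, map_zero]))
      have : (finSuccEquiv k N (X 0 ^ m * g)).natDegree = m + g.degreeOf 0 := by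
        rw [map_mul, map_pow, finSuccEquiv_X_zero, Polynomial.natDegree_X_pow_mul _ heg,
          natDegree_finSuccEquiv]
        omega
      rw [← natDegree_finSuccEquiv, this]
      omega
    · have hid : X 0 ^ (m + i) * emb k N f + X 0 ^ m * g
          = X 0 ^ m * (X 0 ^ i * emb k N f + g) := by
        rw [pow_add]; ring
      rw [hid]
      exact Ideal.mul_mem_left _ _ hmem

/-- The descending step: `Kset I (i+1) ⊆ Kset I i` for `i ≥ d - 1`. -/
lemma Kset_step (I : Ideal (MvPolynomial (Fin (N + 1)) k)) (d : ℕ) {i : ℕ} (hi : d - 1 ≤ i)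
    (hkey : ∀ F ∈ I, ∃ P ∈ I, (F - X 0 * P).degreeOf 0 ≤ d - 1) :
    Kset I (i + 1) ⊆ Kset I i := by
  rintro f ⟨g, hg, hmem⟩
  have hgdeg : g.degreeOf 0 ≤ i := by
    rcases hg with h | h
    · rw [h, degreeOf_zero]; exact Nat.zero_le _
    · omega
  obtain ⟨P, hPI, hPd⟩ := hkey _ hmem
  set F : MvPolynomial (Fin (N + 1)) k := X 0 ^ (i + 1) * emb k N f + g with hF
  set Q : MvPolynomial (Fin (N + 1)) k := F - X 0 * P with hQ
  set g' : MvPolynomial (Fin (N + 1)) k := P - X 0 ^ i * emb k N f with hg'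
  have hQd : Q.degreeOf 0 ≤ d - 1 := hPd
  refine ⟨g', ?_, ?_⟩
  · -- degree condition
    have hXg' : X 0 * g' = g - Q := by
      rw [hg', hQ, hF]; ring
    have heq : Polynomial.X * finSuccEquiv k N g'
        = finSuccEquiv k N g - finSuccEquiv k N Q := by
      rw [← map_sub, ← hXg', map_mul, finSuccEquiv_X_zero]
    by_cases h0 : finSuccEquiv k N g' = 0
    · left
      exact (finSuccEquiv k N).injective (by rw [h0, map_zero])
    · right
      have h1 : (Polynomial.X * finSuccEquiv k N g').natDegree
          = (finSuccEquiv k N g').natDegree + 1 := Polynomial.natDegree_X_mul h0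
      have h2 : (finSuccEquiv k N g - finSuccEquiv k N Q).natDegree ≤ i := by
        refine (Polynomial.natDegree_sub_le _ _).trans (max_le ?_ ?_)
        · rw [natDegree_finSuccEquiv]; exact hgdeg
        · rw [natDegree_finSuccEquiv]; omega
      rw [heq] at h1
      rw [← natDegree_finSuccEquiv]
      omega
  · have hid : X 0 ^ i * emb k N f + g' = P := by rw [hg']; ring
    rw [hid]
    exact hPI

end Aux

/-- If the homogeneous ideal `I ⊆ R` is generated in degrees `≤ d` and
`q = (1,0,…,0) ∈ V(I)` (no element of `I` has a nonzero `x_0^m`-term), then the chain of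
partial elimination ideals stabilizes at step `d − 1`. -/
theorem partial_elimination_stabilizes {k : Type} [Field k] {N : ℕ}
    (I : Ideal (MvPolynomial (Fin (N + 1)) k)) (d : ℕ) (hd : 1 ≤ d)
    (hgen : ∃ G : Set (MvPolynomial (Fin (N + 1)) k), I = Ideal.span G ∧
      ∀ g ∈ G, ∃ n ≤ d, g.IsHomogeneous n)
    (hq : ∀ f ∈ I, ∀ m : ℕ, coeff (Finsupp.single (0 : Fin (N + 1)) m) f = 0) :
    ∀ i : ℕ, d - 1 ≤ i → Kset I i = Kset I (d - 1) := by
  obtain ⟨G, hGI, hGdeg⟩ := hgen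
  have hkey : ∀ F ∈ I, ∃ P ∈ I, (F - X 0 * P).degreeOf 0 ≤ d - 1 :=
    key_decomp I d hd G hGI hGdeg hq
  intro i hi
  refine Set.Subset.antisymm ?_ (Kset_mono I hi)
  induction i, hi using Nat.le_induction with
  | base => exact subset_rfl
  | succ i hi ih => exact (Kset_step I d hi hkey).trans ih
end

section
/- Let I be a homogeneous ideal of R = k[x_0,...,x_N] and let K̃_i(I) = { f ∈ I : d_0(f) ≤ i } be the S-submodule of elements of I of x_0-degree at most i. Then for each i ≥ 1 there is a short exact sequence of graded S-modules 0 → K̃_{i-1}(I)/K̃_0(I) → K̃_i(I)/K̃_0(I) → K_i(I)(−i) → 0, where the last map sends the class of f = x_0^i·f̄ + g (with d_0(g) < i) to f̄. -/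
open MvPolynomial

/-- `K̃_i(I)`: the elements of `I` of `x_0`-degree at most `i` (an `S`-submodule of `I`). -/
def Ktilde {k : Type} [Field k] {N : ℕ} (I : Ideal (MvPolynomial (Fin (N + 1)) k)) (i : ℕ) :
    Set (MvPolynomial (Fin (N + 1)) k) :=
  {f | f ∈ I ∧ f.degreeOf 0 ≤ i}

/-- Extraction of the coefficient of `x_0^i`, writing `f = x_0^i·f̄ + g` with `d_0(g) < i`. -/
noncomputable def leadCoeff (k : Type) [Field k] (N : ℕ) (i : ℕ)
    (f : MvPolynomial (Fin (N + 1)) k) : MvPolynomial (Fin N) k :=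
  (finSuccEquiv k N f).coeff i

lemma emb_finSuccEquiv {k : Type} [Field k] {N : ℕ} (c : MvPolynomial (Fin N) k) :
    finSuccEquiv k N (emb k N c) = Polynomial.C c := by
  induction c using MvPolynomial.induction_on with
  | C a => simp [emb, finSuccEquiv_apply]
  | add p q hp hq => simp [map_add, hp, hq]
  | mul_X p j hp =>
      simp only [emb] at hp
      simp [emb, map_mul, hp, finSuccEquiv_X_succ]

lemma poly_aux {A : Type*} [CommRing A] (p : Polynomial A) (i : ℕ) (h : p.natDegree ≤ i)
    (hq : p - Polynomial.X ^ i * Polynomial.C (p.coeff i) ≠ 0) :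
    (p - Polynomial.X ^ i * Polynomial.C (p.coeff i)).natDegree < i := by
  rw [Polynomial.natDegree_lt_iff_degree_lt hq, Polynomial.degree_lt_iff_coeff_zero]
  intro m hm
  rw [Polynomial.coeff_sub, mul_comm, Polynomial.C_mul_X_pow_eq_monomial,
    Polynomial.coeff_monomial]
  rcases eq_or_lt_of_le (Nat.cast_le.mp hm) with h1 | h1
  · simp [← h1]
  · rw [Polynomial.coeff_eq_zero_of_natDegree_lt (lt_of_le_of_lt h h1), if_neg (by omega)]
    simp

/-- For each `i ≥ 1` there is a short exact sequence of graded `S`-modules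
`0 → K̃_{i-1}(I)/K̃_0(I) → K̃_i(I)/K̃_0(I) → K_i(I)(−i) → 0`, where the surjection sends the
class of `f = x_0^i·f̄ + g` (with `d_0(g) < i`) to `f̄`.  Concretely: the coefficient map
`f ↦ f̄` is `S`-linear, maps `K̃_i(I)` onto `K_i(I)`, has kernel (in `K̃_i(I)`) exactly
`K̃_{i-1}(I)` (which contains `K̃_0(I)`), and shifts internal degrees by `i`. -/
theorem partial_elimination_ses {k : Type} [Field k] {N : ℕ}
    (I : Ideal (MvPolynomial (Fin (N + 1)) k))
    (hI : ∀ f ∈ I, ∀ d : ℕ, homogeneousComponent d f ∈ I) (i : ℕ) (hi : 1 ≤ i) :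
    (∀ f ∈ Ktilde I i, leadCoeff k N i f ∈ Kset I i) ∧
    (∀ f g : MvPolynomial (Fin (N + 1)) k,
      leadCoeff k N i (f + g) = leadCoeff k N i f + leadCoeff k N i g) ∧
    (∀ (c : MvPolynomial (Fin N) k) (f : MvPolynomial (Fin (N + 1)) k),
      leadCoeff k N i (emb k N c * f) = c * leadCoeff k N i f) ∧
    (∀ c ∈ Kset I i, ∃ f ∈ Ktilde I i, leadCoeff k N i f = c) ∧
    (Ktilde I 0 ⊆ Ktilde I (i - 1)) ∧
    (∀ f ∈ Ktilde I i, (leadCoeff k N i f = 0 ↔ f ∈ Ktilde I (i - 1))) ∧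
    (∀ f ∈ Ktilde I i, ∀ m : ℕ, f.IsHomogeneous m →
      (leadCoeff k N i f).IsHomogeneous (m - i)) := by
  refine ⟨?_, ?_, ?_, ?_, ?_, ?_, ?_⟩
  · -- maps into Kset
    rintro f ⟨hfI, hfd⟩
    refine ⟨f - X 0 ^ i * emb k N (leadCoeff k N i f), ?_, by ring_nf; simpa using hfI⟩
    by_cases hg : f - X 0 ^ i * emb k N (leadCoeff k N i f) = 0
    · exact Or.inl hg
    · right
      rw [← natDegree_finSuccEquiv]
      have hφ : finSuccEquiv k N (f - X 0 ^ i * emb k N (leadCoeff k N i f)) =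
          finSuccEquiv k N f - Polynomial.X ^ i *
            Polynomial.C ((finSuccEquiv k N f).coeff i) := by
        simp [map_sub, map_mul, map_pow, emb_finSuccEquiv, finSuccEquiv_X_zero, leadCoeff]
      rw [hφ]
      apply poly_aux _ _ (by rw [natDegree_finSuccEquiv]; exact hfd)
      rw [← hφ]
      simpa using (finSuccEquiv k N).injective.ne hg
  · -- additive
    intro f g; simp [leadCoeff, map_add]
  · -- S-linear
    intro c f
    simp [leadCoeff, map_mul, emb_finSuccEquiv, Polynomial.coeff_C_mul]
  · -- surjective onto Kset
    rintro c ⟨g, hg, hmem⟩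
    refine ⟨X 0 ^ i * emb k N c + g, ⟨hmem, ?_⟩, ?_⟩
    · rw [← natDegree_finSuccEquiv]
      have hφ : finSuccEquiv k N (X 0 ^ i * emb k N c + g) =
          Polynomial.X ^ i * Polynomial.C c + finSuccEquiv k N g := by
        simp [map_add, map_mul, map_pow, emb_finSuccEquiv, finSuccEquiv_X_zero]
      rw [hφ]
      apply le_trans (Polynomial.natDegree_add_le _ _)
      apply max_le
      · exact le_trans (Polynomial.natDegree_mul_le) (by simp)
      · rcases hg with hg | hg
        · simp [hg]
        · rw [natDegree_finSuccEquiv]; omega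
    · have hφ : finSuccEquiv k N (X 0 ^ i * emb k N c + g) =
          Polynomial.X ^ i * Polynomial.C c + finSuccEquiv k N g := by
        simp [map_add, map_mul, map_pow, emb_finSuccEquiv, finSuccEquiv_X_zero]
      have hgc : (finSuccEquiv k N g).coeff i = 0 := by
        rcases hg with hg | hg
        · simp [hg]
        · exact Polynomial.coeff_eq_zero_of_natDegree_lt
            (by rw [natDegree_finSuccEquiv]; exact hg)
      rw [leadCoeff, hφ, Polynomial.coeff_add, hgc, add_zero, mul_comm,
        Polynomial.C_mul_X_pow_eq_monomial, Polynomial.coeff_monomial, if_pos rfl]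
  · -- Ktilde 0 ⊆ Ktilde (i-1)
    rintro f ⟨hfI, hfd⟩
    exact ⟨hfI, le_trans hfd (Nat.zero_le _)⟩
  · -- kernel
    rintro f ⟨hfI, hfd⟩
    constructor
    · intro h0
      refine ⟨hfI, ?_⟩
      by_cases hf : f = 0
      · simp [hf]
      · have hne : finSuccEquiv k N f ≠ 0 := by
          simpa using (finSuccEquiv k N).injective.ne hf
        rw [← natDegree_finSuccEquiv]
        have : (finSuccEquiv k N f).natDegree ≠ i := by
          intro he
          apply hne
          exact Polynomial.leadingCoeff_eq_zero.mp
            (by rw [Polynomial.leadingCoeff, he]; exact h0)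
        have := natDegree_finSuccEquiv f ▸ hfd
        omega
    · rintro ⟨-, hfd'⟩
      apply Polynomial.coeff_eq_zero_of_natDegree_lt
      rw [natDegree_finSuccEquiv]
      omega
  · -- homogeneity
    rintro f ⟨hfI, hfd⟩ m hm
    by_cases hf : f = 0
    · simp [leadCoeff, hf]
      exact isHomogeneous_zero _ _ _
    · by_cases him : i ≤ m
      · exact hm.finSuccEquiv_coeff_isHomogeneous i (m - i) (by omega)
      · have h1 : (finSuccEquiv k N f).natDegree < i := by
          rw [natDegree_finSuccEquiv]
          calc f.degreeOf 0 ≤ f.totalDegree := degreeOf_le_totalDegree f 0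
          _ = m := hm.totalDegree hf
          _ < i := by omega
        have : leadCoeff k N i f = 0 := Polynomial.coeff_eq_zero_of_natDegree_lt h1
        rw [this]
        exact isHomogeneous_zero _ _ _
end

section
/- Let M be a graded module over R = k[x_0,...,x_N], regarded also as a graded module over S = k[x_1,...,x_N], and let μ: M → M(1) be the S-linear map given by multiplication by x_0. Then there is a long exact sequence of graded vector spaces ⋯ → Tor_i^R(M,k)_{i+j} → Tor_{i-1}^S(M,k)_{i-1+j} → Tor_{i-1}^S(M,k)_{i+j} → Tor_{i-1}^R(M,k)_{i+j} → ⋯ in which the middle map is induced by multiplication by x_0. -/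
open MvPolynomial

section Framework

variable {k : Type} [Field k]

/-- Cast between components of a graded module along an equality of degrees. -/
def mcast {M : ℤ → Type} [∀ j, AddCommGroup (M j)] [∀ j, Module k (M j)]
    {j j' : ℤ} (h : j = j') : M j →ₗ[k] M j' := by subst h; exact LinearMap.id

variable (M : ℤ → Type) [∀ j, AddCommGroup (M j)] [∀ j, Module k (M j)]

/-- The `(i, D)`-term `⋀^i W ⊗ M_{D-i}` of the Koszul complex of the graded module `M`
over a polynomial ring in `n` variables, in internal (total) degree `D`; a basis element
of `⋀^i W` is an `i`-element subset of the variables. -/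
abbrev KT (n : ℕ) (i D : ℤ) : Type :=
  {T : Finset (Fin n) // (T.card : ℤ) = i} → M (D - i)

/-- Cast between Koszul terms along equalities of the indices. -/
def ktcast {n : ℕ} {i i' D D' : ℤ} (h : i = i') (h' : D = D') :
    KT M n i D →ₗ[k] KT M n i' D' := by subst h; subst h'; exact LinearMap.id

variable {n : ℕ} (a : ∀ _ : Fin n, ∀ j, M j →ₗ[k] M (j + 1))

/-- The Koszul differential. -/
noncomputable def kd (i D : ℤ) : KT M n i D →ₗ[k] KT M n (i - 1) D where
  toFun w T := ∑ s : Fin n,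
    if h : s ∈ T.1 then 0
    else ((-1 : ℤ) ^ (T.1.filter (· < s)).card) •
      (mcast (M := M) (k := k) (by ring) (a s (D - i) (w ⟨insert s T.1, by
        rw [Finset.card_insert_of_notMem h]; have := T.2; push_cast at this ⊢; omega⟩)))
  map_add' w w' := by
    funext T
    rw [Pi.add_apply]
    rw [← Finset.sum_add_distrib]
    refine Finset.sum_congr rfl fun s _ => ?_
    split_ifs with h
    · simp
    · rw [Pi.add_apply, map_add, map_add, smul_add]
  map_smul' c w := by
    funext T
    simp only [RingHom.id_apply, Pi.smul_apply]
    rw [Finset.smul_sum]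
    refine Finset.sum_congr rfl fun s _ => ?_
    split_ifs with h
    · simp
    · show _ • (mcast _ ((a s (D - i)) ((c • w) _))) = _
      rw [Pi.smul_apply, map_smul, map_smul, smul_comm]

/-- The boundary submodule of the space of Koszul `i`-cycles. -/
noncomputable def kbdry (i D : ℤ) : Submodule k (LinearMap.ker (kd M a i D)) :=
  Submodule.comap (LinearMap.ker (kd M a i D)).subtype
    (LinearMap.range ((ktcast M (show i + 1 - 1 = i by ring) rfl).comp (kd M a (i + 1) D)))

/-- The internal-degree-`D` part of `Tor_i(M, k)` over the polynomial ring in `n`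
variables, computed as Koszul homology:  `ker ∂_i / im ∂_{i+1}`. -/
noncomputable def TorP (i D : ℤ) : Type :=
  LinearMap.ker (kd M a i D) ⧸ kbdry M a i D

noncomputable instance (i D : ℤ) : AddCommGroup (TorP M a i D) := by
  unfold TorP; infer_instance

noncomputable instance (i D : ℤ) : Module k (TorP M a i D) := by
  unfold TorP; infer_instance

/-- The projection from Koszul `i`-cycles onto the Tor homology module `TorP`. -/
noncomputable def torproj (i D : ℤ) : LinearMap.ker (kd M a i D) →ₗ[k] TorP M a i D :=
  (kbdry M a i D).mkQ

/-- The map on Koszul terms induced by a degree-one operator `b` on `M`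
(e.g. multiplication by `x_0`); it raises the internal degree by one. -/
noncomputable def ktmul (b : ∀ j, M j →ₗ[k] M (j + 1)) (i D : ℤ) :
    KT M n i D →ₗ[k] KT M n i (D + 1) where
  toFun w T := mcast (M := M) (k := k) (by ring) (b (D - i) (w T))
  map_add' w w' := by
    funext T
    show mcast (M := M) (k := k) (by ring) (b (D - i) ((w + w') T)) = _
    rw [Pi.add_apply, map_add, map_add]; rfl
  map_smul' c w := by
    funext T
    show mcast (M := M) (k := k) (by ring) (b (D - i) ((c • w) T)) = _
    rw [Pi.smul_apply, map_smul, map_smul]; rfl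

end Framework

section IdealComp

variable {k : Type} [Field k] {m : ℕ}

lemma hsup_eq (d : ℕ) :
    (⨆ (d' : ℕ) (_ : (d' : ℤ) = (d : ℤ)), homogeneousSubmodule (Fin m) k d')
      = homogeneousSubmodule (Fin m) k d := by
  apply le_antisymm
  · refine iSup_le fun d' => iSup_le fun h => ?_
    obtain rfl : d' = d := by exact_mod_cast h
    exact le_rfl
  · exact le_iSup_of_le d (le_iSup_of_le rfl le_rfl)

lemma mem_hsup_mul (s : Fin m) {x : MvPolynomial (Fin m) k} {j : ℤ}
    (hx : x ∈ ⨆ (d : ℕ) (_ : (d : ℤ) = j), homogeneousSubmodule (Fin m) k d) :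
    X s * x ∈ ⨆ (d : ℕ) (_ : (d : ℤ) = j + 1), homogeneousSubmodule (Fin m) k d := by
  rcases lt_or_ge j 0 with hj | hj
  · have hb : (⨆ (d : ℕ) (_ : (d : ℤ) = j), homogeneousSubmodule (Fin m) k d) = ⊥ := by
      apply le_antisymm _ bot_le
      exact iSup_le fun d => iSup_le fun hd => absurd hd (by omega)
    rw [hb, Submodule.mem_bot] at hx
    rw [hx, mul_zero]; exact zero_mem _
  · obtain ⟨d, rfl⟩ : ∃ d : ℕ, (d : ℤ) = j := ⟨j.toNat, by omega⟩
    rw [hsup_eq] at hx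
    have hc : ((d + 1 : ℕ) : ℤ) = (d : ℤ) + 1 := by push_cast; ring
    rw [← hc, hsup_eq]
    rw [mem_homogeneousSubmodule] at hx ⊢
    simpa [Nat.add_comm] using (isHomogeneous_X k s).mul hx

/-- The degree-`j` homogeneous component of an ideal, as a `k`-subspace. -/
noncomputable def comp (I : Ideal (MvPolynomial (Fin m) k)) (j : ℤ) :
    Submodule k (MvPolynomial (Fin m) k) :=
  (I.restrictScalars k) ⊓ (⨆ (d : ℕ) (_ : (d : ℤ) = j), homogeneousSubmodule (Fin m) k d)

/-- The degree-`j` component of `I`, as a type. -/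
abbrev Comp (I : Ideal (MvPolynomial (Fin m) k)) (j : ℤ) : Type := ↥(comp I j)

/-- Multiplication by the variable `X s`: the degree-one shifting action on components. -/
noncomputable def mulX (I : Ideal (MvPolynomial (Fin m) k)) (s : Fin m) (j : ℤ) :
    Comp I j →ₗ[k] Comp I (j + 1) where
  toFun f := ⟨X s * f.1, ⟨I.mul_mem_left _ f.2.1, mem_hsup_mul s f.2.2⟩⟩
  map_add' f g := by ext; simp [mul_add]
  map_smul' c f := by ext; simp [mul_smul_comm]

/-- The internal-degree-`D` part of `Tor_i(I, k)` of an ideal `I` over its own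
polynomial ring. -/
noncomputable abbrev TorI (I : Ideal (MvPolynomial (Fin m) k)) (i D : ℤ) :=
  TorP (fun j => Comp I j) (fun s j => mulX I s j) i D

end IdealComp

section Aux

variable {k : Type} [Field k] {M : ℤ → Type} [∀ j, AddCommGroup (M j)] [∀ j, Module k (M j)]

lemma mcast_mcast {j1 j2 j3 : ℤ} (h : j1 = j2) (h' : j2 = j3) (x : M j1) :
    mcast (k := k) h' (mcast (k := k) h x) = mcast (k := k) (h.trans h') x := by
  subst h; rfl

lemma b_mcast (b : ∀ j, M j →ₗ[k] M (j + 1)) {j j' : ℤ} (h : j = j') (x : M j) :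
    b j' (mcast (k := k) h x) = mcast (k := k) (by rw [h]) (b j x) := by subst h; rfl

variable (M)

lemma ktcast_ktcast {n : ℕ} {i1 i2 i3 D1 D2 D3 : ℤ} (h : i1 = i2) (h' : D1 = D2)
    (g : i2 = i3) (g' : D2 = D3) (x : KT M n i1 D1) :
    ktcast (k := k) M g g' (ktcast (k := k) M h h' x)
      = ktcast (k := k) M (h.trans g) (h'.trans g') x := by
  subst h; subst h'; rfl

lemma ktcast_apply_fst {n : ℕ} {i D D' : ℤ} (h' : D = D') (x : KT M n i D)
    (T : {T : Finset (Fin n) // (T.card : ℤ) = i}) :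
    ktcast (k := k) M rfl h' x T = mcast (k := k) (by rw [h']) (x T) := by subst h'; rfl

lemma kd_ktcast {n : ℕ} (a : ∀ _ : Fin n, ∀ j, M j →ₗ[k] M (j + 1))
    {i i' D D' : ℤ} (h : i = i') (h' : D = D') (x : KT M n i D) :
    kd M a i' D' (ktcast (k := k) M h h' x)
      = ktcast (k := k) M (by rw [h]) h' (kd M a i D x) := by
  subst h; subst h'; rfl

lemma ktmul_ktcast {n : ℕ} (b : ∀ j, M j →ₗ[k] M (j + 1))
    {i i' D D' : ℤ} (h : i = i') (h' : D = D') (x : KT M n i D) :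
    ktmul (n := n) M b i' D' (ktcast (k := k) M h h' x)
      = ktcast (k := k) M h (by rw [h']) (ktmul M b i D x) := by
  subst h; subst h'; rfl

lemma ktcast_eq_zero_iff {n : ℕ} {i i' D D' : ℤ} (h : i = i') (h' : D = D')
    (x : KT M n i D) : ktcast (k := k) M h h' x = 0 ↔ x = 0 := by
  subst h; subst h'; exact Iff.rfl

lemma kw_congr {n : ℕ} {i D : ℤ} (w : KT M n i D)
    {T T' : {T : Finset (Fin n) // (T.card : ℤ) = i}} (h : T.1 = T'.1) : w T = w T' :=
  congrArg w (Subtype.ext h)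

variable {n : ℕ}

/-- Preimage of a subset of `Fin (n+1)` under `succ`. -/
def pre (T : Finset (Fin (n + 1))) : Finset (Fin n) :=
  Finset.univ.filter (fun t => t.succ ∈ T)

lemma mem_pre {T : Finset (Fin (n + 1))} {t : Fin n} : t ∈ pre T ↔ t.succ ∈ T := by
  simp [pre]

lemma succEmb_apply (t : Fin n) : (Fin.succEmb n) t = t.succ := rfl

lemma zero_not_mem_map (T : Finset (Fin n)) : (0 : Fin (n+1)) ∉ T.map (Fin.succEmb n) := by
  simp only [Finset.mem_map, succEmb_apply]
  rintro ⟨t, -, ht⟩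
  exact Fin.succ_ne_zero t ht

lemma map_pre {T : Finset (Fin (n + 1))} (h0 : (0 : Fin (n+1)) ∉ T) :
    (pre T).map (Fin.succEmb n) = T := by
  ext z
  refine Fin.cases ?_ (fun t => ?_) z
  · simp only [h0, iff_false]; exact zero_not_mem_map _
  · rw [show (t.succ : Fin (n+1)) = (Fin.succEmb n) t from rfl, Finset.mem_map']
    exact mem_pre

lemma pre_map (T : Finset (Fin n)) : pre (T.map (Fin.succEmb n)) = T := by
  ext t
  rw [mem_pre, show (t.succ : Fin (n+1)) = (Fin.succEmb n) t from rfl, Finset.mem_map']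

lemma card_pre {T : Finset (Fin (n + 1))} (h0 : (0 : Fin (n+1)) ∉ T) :
    (pre T).card = T.card := by
  conv_rhs => rw [← map_pre h0]
  rw [Finset.card_map]

/-- First projection: the part of a Koszul chain over `n+1` variables on subsets
not containing the variable `0`. -/
noncomputable def pi1 (i D : ℤ) : KT M (n + 1) i D →ₗ[k] KT M n i D where
  toFun w T := w ⟨T.1.map (Fin.succEmb n), by rw [Finset.card_map]; exact T.2⟩
  map_add' _ _ := rfl
  map_smul' _ _ := rfl

/-- Second projection: the part of a Koszul chain over `n+1` variables on subsets
containing the variable `0`. -/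
noncomputable def pi2 (i D : ℤ) : KT M (n + 1) i D →ₗ[k] KT M n (i - 1) (D - 1) :=
  LinearMap.pi fun T => (mcast (k := k) (show D - i = D - 1 - (i - 1) by ring)).comp
    (LinearMap.proj ⟨insert 0 (T.1.map (Fin.succEmb n)), by
      rw [Finset.card_insert_of_notMem (zero_not_mem_map _), Finset.card_map]
      have := T.2; push_cast at this ⊢; omega⟩)

@[simp] lemma pi1_apply (i D : ℤ) (w : KT M (n+1) i D)
    (T : {T : Finset (Fin n) // (T.card : ℤ) = i}) :
    pi1 (k := k) M i D w T = w ⟨T.1.map (Fin.succEmb n), by rw [Finset.card_map]; exact T.2⟩ := rfl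

@[simp] lemma pi2_apply (i D : ℤ) (w : KT M (n+1) i D)
    (T : {T : Finset (Fin n) // (T.card : ℤ) = i - 1}) :
    pi2 (k := k) M i D w T = mcast (k := k) (show D - i = D - 1 - (i - 1) by ring)
      (w ⟨insert 0 (T.1.map (Fin.succEmb n)), by
        rw [Finset.card_insert_of_notMem (zero_not_mem_map _), Finset.card_map]
        have := T.2; push_cast at this ⊢; omega⟩) := rfl

/-- First inclusion. -/
noncomputable def sigma1 (i D : ℤ) : KT M n i D →ₗ[k] KT M (n + 1) i D :=
  LinearMap.pi fun T => if h : (0 : Fin (n+1)) ∈ T.1 then 0 else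
    LinearMap.proj ⟨pre T.1, by rw [card_pre h]; exact T.2⟩

/-- Second inclusion. -/
noncomputable def sigma2 (i D : ℤ) : KT M n (i - 1) (D - 1) →ₗ[k] KT M (n + 1) i D :=
  LinearMap.pi fun T => if h : (0 : Fin (n+1)) ∈ T.1 then
    (mcast (k := k) (show D - 1 - (i - 1) = D - i by ring)).comp
      (LinearMap.proj ⟨pre (T.1.erase 0), by
        rw [card_pre (Finset.notMem_erase _ _), Finset.card_erase_of_mem h]
        have hpos : 1 ≤ T.1.card := Finset.card_pos.mpr ⟨0, h⟩
        have := T.2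
        rw [Nat.cast_sub hpos]; omega⟩)
    else 0

@[simp] lemma sigma1_apply (i D : ℤ) (u : KT M n i D)
    (T : {T : Finset (Fin (n+1)) // (T.card : ℤ) = i}) :
    sigma1 (k := k) M i D u T = if h : (0 : Fin (n+1)) ∈ T.1 then 0 else
      u ⟨pre T.1, by rw [card_pre h]; exact T.2⟩ := by
  rw [sigma1, LinearMap.pi_apply]
  by_cases h : (0 : Fin (n+1)) ∈ T.1
  · rw [dif_pos h, dif_pos h, LinearMap.zero_apply]
  · rw [dif_neg h, dif_neg h, LinearMap.proj_apply]

@[simp] lemma sigma2_apply (i D : ℤ) (v : KT M n (i - 1) (D - 1))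
    (T : {T : Finset (Fin (n+1)) // (T.card : ℤ) = i}) :
    sigma2 (k := k) M i D v T = if h : (0 : Fin (n+1)) ∈ T.1 then
      mcast (k := k) (show D - 1 - (i - 1) = D - i by ring)
        (v ⟨pre (T.1.erase 0), by
          rw [card_pre (Finset.notMem_erase _ _), Finset.card_erase_of_mem h]
          have hpos : 1 ≤ T.1.card := Finset.card_pos.mpr ⟨0, h⟩
          have := T.2
          rw [Nat.cast_sub hpos]; omega⟩)
      else 0 := by
  rw [sigma2, LinearMap.pi_apply]
  by_cases h : (0 : Fin (n+1)) ∈ T.1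
  · rw [dif_pos h, dif_pos h, LinearMap.comp_apply, LinearMap.proj_apply]
  · rw [dif_neg h, dif_neg h, LinearMap.zero_apply]

end Aux
section Aux2

variable {k : Type} [Field k] (M : ℤ → Type) [∀ j, AddCommGroup (M j)] [∀ j, Module k (M j)]
variable {n : ℕ}

lemma pi1_sigma1 (i D : ℤ) (u : KT M n i D) :
    pi1 (k := k) M i D (sigma1 (k := k) M i D u) = u := by
  funext T
  rw [pi1_apply, sigma1_apply, dif_neg (zero_not_mem_map _)]
  exact kw_congr M u (pre_map T.1)

lemma pi2_sigma1 (i D : ℤ) (u : KT M n i D) :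
    pi2 (k := k) M i D (sigma1 (k := k) M i D u) = 0 := by
  funext T
  rw [pi2_apply, sigma1_apply, dif_pos (Finset.mem_insert_self 0 _), map_zero]
  rfl

lemma pi1_sigma2 (i D : ℤ) (v : KT M n (i - 1) (D - 1)) :
    pi1 (k := k) M i D (sigma2 (k := k) M i D v) = 0 := by
  funext T
  rw [pi1_apply, sigma2_apply, dif_neg (zero_not_mem_map _)]
  rfl

lemma pi2_sigma2 (i D : ℤ) (v : KT M n (i - 1) (D - 1)) :
    pi2 (k := k) M i D (sigma2 (k := k) M i D v) = v := by
  funext T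
  rw [pi2_apply, sigma2_apply, dif_pos (Finset.mem_insert_self 0 _), mcast_mcast]
  refine kw_congr M v ?_
  show pre ((insert (0 : Fin (n+1)) (T.1.map (Fin.succEmb n))).erase 0) = T.1
  rw [Finset.erase_insert (zero_not_mem_map _), pre_map]

lemma sigma_pi (i D : ℤ) (w : KT M (n + 1) i D) :
    sigma1 (k := k) M i D (pi1 (k := k) M i D w)
      + sigma2 (k := k) M i D (pi2 (k := k) M i D w) = w := by
  funext T
  rw [Pi.add_apply, sigma1_apply, sigma2_apply]
  by_cases h : (0 : Fin (n+1)) ∈ T.1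
  · rw [dif_pos h, dif_pos h, zero_add, pi2_apply, mcast_mcast]
    refine kw_congr M w ?_
    show insert (0 : Fin (n+1)) ((pre ((T.1).erase 0)).map (Fin.succEmb n)) = T.1
    rw [map_pre (Finset.notMem_erase _ _), Finset.insert_erase h]
  · rw [dif_neg h, dif_neg h, add_zero, pi1_apply]
    refine kw_congr M w ?_
    show (pre T.1).map (Fin.succEmb n) = T.1
    rw [map_pre h]

lemma pi_eq_zero_iff (i D : ℤ) (w : KT M (n + 1) i D) :
    w = 0 ↔ pi1 (k := k) M i D w = 0 ∧ pi2 (k := k) M i D w = 0 := by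
  constructor
  · rintro rfl
    exact ⟨map_zero (pi1 (k := k) M i D), map_zero (pi2 (k := k) M i D)⟩
  · rintro ⟨h1, h2⟩
    have hsp := sigma_pi (k := k) M i D w
    rw [h1, h2, map_zero (sigma1 (k := k) M i D), map_zero (sigma2 (k := k) M i D),
      add_zero] at hsp
    exact hsp.symm

lemma pi1_ktcast {i i' D D' : ℤ} (h : i = i') (h' : D = D') (w : KT M (n + 1) i D) :
    pi1 (k := k) M i' D' (ktcast (k := k) M h h' w)
      = ktcast (k := k) M h h' (pi1 (k := k) M i D w) := by
  subst h; subst h'; rfl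

lemma pi2_ktcast {i i' D D' : ℤ} (h : i = i') (h' : D = D') (w : KT M (n + 1) i D) :
    pi2 (k := k) M i' D' (ktcast (k := k) M h h' w)
      = ktcast (k := k) M (by rw [h]) (by rw [h']) (pi2 (k := k) M i D w) := by
  subst h; subst h'; rfl

lemma sigma1_ktcast {i i' D D' : ℤ} (h : i = i') (h' : D = D') (u : KT M n i D) :
    sigma1 (k := k) M i' D' (ktcast (k := k) M h h' u)
      = ktcast (k := k) M h h' (sigma1 (k := k) M i D u) := by
  subst h; subst h'; rfl

lemma sigma2_ktcast {i i' D D' : ℤ} (h : i = i') (h' : D = D') (v : KT M n (i - 1) (D - 1)) :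
    sigma2 (k := k) M i' D' (ktcast (k := k) M (by rw [h]) (by rw [h']) v)
      = ktcast (k := k) M h h' (sigma2 (k := k) M i D v) := by
  subst h; subst h'; rfl

lemma kd_apply {n : ℕ} (a : ∀ _ : Fin n, ∀ j, M j →ₗ[k] M (j + 1)) (i D : ℤ) (w : KT M n i D)
    (T : {T : Finset (Fin n) // (T.card : ℤ) = i - 1}) :
    kd M a i D w T = ∑ s : Fin n,
      if h : s ∈ T.1 then 0
      else ((-1 : ℤ) ^ (T.1.filter (· < s)).card) •
        (mcast (M := M) (k := k) (by ring) (a s (D - i) (w ⟨insert s T.1, by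
          rw [Finset.card_insert_of_notMem h]; have := T.2; push_cast at this ⊢; omega⟩))) := rfl

lemma ktmul_apply {n : ℕ} (b : ∀ j, M j →ₗ[k] M (j + 1)) (i D : ℤ) (w : KT M n i D)
    (T : {T : Finset (Fin n) // (T.card : ℤ) = i}) :
    ktmul M b i D w T = mcast (M := M) (k := k) (by ring) (b (D - i) (w T)) := rfl

end Aux2
section Aux3

variable {k : Type} [Field k] (M : ℤ → Type) [∀ j, AddCommGroup (M j)] [∀ j, Module k (M j)]
variable {n : ℕ}

lemma filter_lt_zero (T : Finset (Fin (n + 1))) :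
    (T.filter (· < (0 : Fin (n+1)))) = ∅ := by
  rw [Finset.filter_eq_empty_iff]
  intro z _
  simp

lemma filter_lt_succ_map (T : Finset (Fin n)) (t : Fin n) :
    ((T.map (Fin.succEmb n)).filter (· < t.succ)).card = (T.filter (· < t)).card := by
  rw [Finset.filter_map, Finset.card_map]
  congr 1
  apply Finset.filter_congr
  intro r _
  show r.succ < t.succ ↔ r < t
  exact Fin.succ_lt_succ_iff

lemma filter_lt_succ_insert (T : Finset (Fin n)) (t : Fin n) :
    ((insert (0 : Fin (n+1)) (T.map (Fin.succEmb n))).filter (· < t.succ)).card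
      = (T.filter (· < t)).card + 1 := by
  rw [Finset.filter_insert, if_pos t.succ_pos,
    Finset.card_insert_of_notMem (fun hc => zero_not_mem_map T (Finset.mem_filter.mp hc).1),
    filter_lt_succ_map]

lemma succ_mem_map_iff {T : Finset (Fin n)} {t : Fin n} :
    t.succ ∈ T.map (Fin.succEmb n) ↔ t ∈ T := Finset.mem_map' _

/-- Mapping cone relation, first component. -/
lemma pi1_kd (a : ∀ _ : Fin (n + 1), ∀ j, M j →ₗ[k] M (j + 1)) (i D : ℤ) (w : KT M (n+1) i D) :
    pi1 (k := k) M (i-1) D (kd M a i D w)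
      = kd M (fun s : Fin n => a s.succ) i D (pi1 (k := k) M i D w)
        + ktcast (k := k) M rfl (show D - 1 + 1 = D by ring)
            (ktmul M (a 0) (i-1) (D-1) (pi2 (k := k) M i D w)) := by
  funext T
  rw [Pi.add_apply, pi1_apply, kd_apply, kd_apply, Fin.sum_univ_succ, add_comm]
  congr 1
  · -- succ part equals the kd over n variables
    refine Finset.sum_congr rfl fun t _ => ?_
    dsimp only
    by_cases ht : t ∈ T.1
    · rw [dif_pos (succ_mem_map_iff.mpr ht), dif_pos ht]
    · rw [dif_neg (fun hc => ht (succ_mem_map_iff.mp hc)), dif_neg ht]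
      have hv : w ⟨insert t.succ ((T.1).map (Fin.succEmb n)), by
            rw [Finset.card_insert_of_notMem (fun hc => ht (succ_mem_map_iff.mp hc))]
            rw [Finset.card_map]; have := T.2; push_cast at this ⊢; omega⟩
          = w ⟨(insert t T.1).map (Fin.succEmb n), by
            rw [Finset.card_map, Finset.card_insert_of_notMem ht]
            have := T.2; push_cast at this ⊢; omega⟩ := by
        refine kw_congr M w ?_
        show insert t.succ ((T.1).map (Fin.succEmb n)) = (insert t T.1).map (Fin.succEmb n)
        rw [Finset.map_insert]
        rfl
      rw [filter_lt_succ_map, hv, pi1_apply]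
  · -- the `0` term equals the multiplication term
    rw [dif_neg (zero_not_mem_map _), ktcast_apply_fst, ktmul_apply, pi2_apply,
      b_mcast, mcast_mcast, mcast_mcast]
    dsimp only
    rw [filter_lt_zero, Finset.card_empty, pow_zero, one_smul]

/-- Mapping cone relation, second component. -/
lemma pi2_kd (a : ∀ _ : Fin (n + 1), ∀ j, M j →ₗ[k] M (j + 1)) (i D : ℤ) (w : KT M (n+1) i D) :
    pi2 (k := k) M (i-1) D (kd M a i D w)
      = - kd M (fun s : Fin n => a s.succ) (i-1) (D-1) (pi2 (k := k) M i D w) := by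
  funext T
  rw [pi2_apply, Pi.neg_apply, kd_apply, kd_apply, map_sum, Fin.sum_univ_succ,
    dif_pos (Finset.mem_insert_self 0 _), map_zero, zero_add, ← Finset.sum_neg_distrib]
  refine Finset.sum_congr rfl fun t _ => ?_
  dsimp only
  by_cases ht : t ∈ T.1
  · rw [dif_pos (Finset.mem_insert_of_mem (succ_mem_map_iff.mpr ht)), dif_pos ht,
      neg_zero, map_zero]
  · have hmem : t.succ ∉ insert (0 : Fin (n+1)) ((T.1).map (Fin.succEmb n)) := by
      intro hc
      rcases Finset.mem_insert.mp hc with h0 | hm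
      · exact Fin.succ_ne_zero t h0
      · exact ht (succ_mem_map_iff.mp hm)
    rw [dif_neg hmem, dif_neg ht, map_zsmul, mcast_mcast, filter_lt_succ_insert, pow_succ,
      mul_neg_one, neg_smul, neg_inj, pi2_apply, b_mcast, mcast_mcast]
    have hv : w ⟨insert t.succ (insert (0 : Fin (n+1)) ((T.1).map (Fin.succEmb n))), by
          rw [Finset.card_insert_of_notMem hmem,
            Finset.card_insert_of_notMem (zero_not_mem_map _), Finset.card_map]
          have := T.2; push_cast at this ⊢; omega⟩
        = w ⟨insert (0 : Fin (n+1)) ((insert t T.1).map (Fin.succEmb n)), by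
          rw [Finset.card_insert_of_notMem, Finset.card_map,
            Finset.card_insert_of_notMem ht]
          · have := T.2; push_cast at this ⊢; omega
          · exact zero_not_mem_map _⟩ := by
      refine kw_congr M w ?_
      show insert t.succ (insert (0 : Fin (n+1)) ((T.1).map (Fin.succEmb n)))
        = insert (0 : Fin (n+1)) ((insert t T.1).map (Fin.succEmb n))
      rw [Finset.map_insert, Finset.insert_comm]
      rfl
    rw [hv]

/-- Multiplication by `x_0` is a chain map for the small Koszul complex. -/
lemma kd_ktmul (a : ∀ _ : Fin (n + 1), ∀ j, M j →ₗ[k] M (j + 1))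
    (hcomm : ∀ s t j, (a s (j + 1)).comp (a t j) = (a t (j + 1)).comp (a s j))
    (i D : ℤ) (v : KT M n i D) :
    kd M (fun s : Fin n => a s.succ) i (D + 1) (ktmul M (a 0) i D v)
      = ktmul M (a 0) (i-1) D (kd M (fun s : Fin n => a s.succ) i D v) := by
  funext T
  rw [kd_apply, ktmul_apply, kd_apply, map_sum, map_sum]
  refine Finset.sum_congr rfl fun t _ => ?_
  by_cases ht : t ∈ T.1
  · rw [dif_pos ht, dif_pos ht, map_zero, map_zero]
  · rw [dif_neg ht, dif_neg ht, ktmul_apply, map_zsmul, map_zsmul, b_mcast, b_mcast,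
      mcast_mcast, mcast_mcast]
    have hc : a t.succ (D - i + 1) (a 0 (D - i) (v ⟨insert t T.1, by
          rw [Finset.card_insert_of_notMem ht]; have := T.2; push_cast at this ⊢; omega⟩))
        = a 0 (D - i + 1) (a t.succ (D - i) (v ⟨insert t T.1, by
          rw [Finset.card_insert_of_notMem ht]; have := T.2; push_cast at this ⊢; omega⟩)) :=
      LinearMap.congr_fun (hcomm t.succ 0 (D - i)) _
    rw [hc]

end Aux3
section Aux4

variable {k : Type} [Field k] (M : ℤ → Type) [∀ j, AddCommGroup (M j)] [∀ j, Module k (M j)]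

lemma ktcast_refl {n : ℕ} {i D : ℤ} (h : i = i) (h' : D = D) (x : KT M n i D) :
    ktcast (k := k) M h h' x = x := rfl

lemma ktcast_zero {n : ℕ} {i i' D D' : ℤ} (h : i = i') (h' : D = D') :
    ktcast (k := k) M h h' (0 : KT M n i D) = 0 := map_zero _

lemma ktcast_neg {n : ℕ} {i i' D D' : ℤ} (h : i = i') (h' : D = D') (x : KT M n i D) :
    ktcast (k := k) M h h' (-x) = -(ktcast (k := k) M h h' x) := map_neg _ _

/-- Flexible characterization of membership in the boundary submodule. -/
lemma mem_kbdry_iff {n : ℕ} (a : ∀ _ : Fin n, ∀ j, M j →ₗ[k] M (j + 1)) (i D : ℤ)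
    (x : LinearMap.ker (kd M a i D)) :
    x ∈ kbdry M a i D ↔ ∃ i' : ℤ, ∃ h : i' - 1 = i, ∃ p : KT M n i' D,
      ktcast (k := k) M h rfl (kd M a i' D p) = x.1 := by
  unfold kbdry
  rw [Submodule.mem_comap, LinearMap.mem_range]
  constructor
  · rintro ⟨p, hp⟩
    exact ⟨i + 1, by ring, p, hp⟩
  · rintro ⟨i', h, p, hp⟩
    refine ⟨ktcast (k := k) M (show i' = i + 1 by omega) rfl p, ?_⟩
    show ktcast (k := k) M _ rfl (kd M a (i+1) D (ktcast (k := k) M _ rfl p)) = _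
    rw [kd_ktcast, ktcast_ktcast]
    exact hp

variable {n : ℕ} (a : ∀ _ : Fin (n + 1), ∀ j, M j →ₗ[k] M (j + 1))

/-- The connecting map on cycles: projection to the `x_0`-part. -/
noncomputable def Fcyc (i D : ℤ) :
    LinearMap.ker (kd M a i D) →ₗ[k]
      LinearMap.ker (kd M (fun s : Fin n => a s.succ) (i - 1) (D - 1)) :=
  LinearMap.codRestrict _ ((pi2 (k := k) M i D).comp (Submodule.subtype _)) (fun w => by
    rw [LinearMap.mem_ker]
    simp only [LinearMap.comp_apply, Submodule.coe_subtype]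
    have h2 := pi2_kd M a i D w.1
    rw [LinearMap.mem_ker.mp w.2, map_zero] at h2
    exact neg_eq_zero.mp h2.symm)

lemma Fcyc_coe (i D : ℤ) (w : LinearMap.ker (kd M a i D)) :
    (Fcyc M a i D w).1 = pi2 (k := k) M i D w.1 := rfl

/-- The map on cycles induced by the inclusion of the small Koszul complex. -/
noncomputable def Hcyc (i D : ℤ) :
    LinearMap.ker (kd M (fun s : Fin n => a s.succ) i D) →ₗ[k]
      LinearMap.ker (kd M a i D) :=
  LinearMap.codRestrict _ ((sigma1 (k := k) M i D).comp (Submodule.subtype _)) (fun u => by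
    rw [LinearMap.mem_ker, pi_eq_zero_iff (k := k) M (i - 1) D]
    simp only [LinearMap.comp_apply, Submodule.coe_subtype]
    constructor
    · rw [pi1_kd, pi1_sigma1, pi2_sigma1, LinearMap.mem_ker.mp u.2,
        map_zero (ktmul M (a 0) (i-1) (D-1)), map_zero, add_zero]
    · rw [pi2_kd, pi2_sigma1, map_zero (kd M (fun s : Fin n => a s.succ) (i-1) (D-1)), neg_zero])

lemma Hcyc_coe (i D : ℤ) (u : LinearMap.ker (kd M (fun s : Fin n => a s.succ) i D)) :
    (Hcyc M a i D u).1 = sigma1 (k := k) M i D u.1 := rfl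

variable (hcomm : ∀ s t j, (a s (j + 1)).comp (a t j) = (a t (j + 1)).comp (a s j))

/-- The map on cycles induced by multiplication by `x_0`. -/
noncomputable def Gcyc (i D : ℤ) :
    LinearMap.ker (kd M (fun s : Fin n => a s.succ) i (D - 1)) →ₗ[k]
      LinearMap.ker (kd M (fun s : Fin n => a s.succ) i D) :=
  LinearMap.codRestrict _
    ((ktcast (k := k) M rfl (show D - 1 + 1 = D by ring)).comp
      ((ktmul M (a 0) i (D - 1)).comp (Submodule.subtype _))) (fun v => by
    rw [LinearMap.mem_ker]
    show kd M (fun s : Fin n => a s.succ) i D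
      (ktcast (k := k) M rfl _ (ktmul M (a 0) i (D - 1) v.1)) = 0
    rw [kd_ktcast, kd_ktmul M a hcomm, LinearMap.mem_ker.mp v.2,
      map_zero (ktmul M (a 0) (i-1) (D-1)), map_zero])

lemma Gcyc_coe (i D : ℤ) (v : LinearMap.ker (kd M (fun s : Fin n => a s.succ) i (D - 1))) :
    (Gcyc M a hcomm i D v).1
      = ktcast (k := k) M rfl (show D - 1 + 1 = D by ring)
          (ktmul M (a 0) i (D - 1) v.1) := rfl

end Aux4
section Aux5

variable {k : Type} [Field k] (M : ℤ → Type) [∀ j, AddCommGroup (M j)] [∀ j, Module k (M j)]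
variable {n : ℕ} (a : ∀ _ : Fin (n + 1), ∀ j, M j →ₗ[k] M (j + 1))

lemma kd_sigma1 (i D : ℤ) (u : KT M n i D) :
    kd M a i D (sigma1 (k := k) M i D u)
      = sigma1 (k := k) M (i-1) D (kd M (fun s : Fin n => a s.succ) i D u) := by
  have hsp := sigma_pi (k := k) M (i-1) D (kd M a i D (sigma1 (k := k) M i D u))
  rw [pi1_kd, pi1_sigma1, pi2_sigma1, map_zero (ktmul M (a 0) (i-1) (D-1)),
    map_zero (ktcast (k := k) M rfl (show D - 1 + 1 = D by ring)), add_zero,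
    pi2_kd, pi2_sigma1, map_zero (kd M (fun s : Fin n => a s.succ) (i-1) (D-1)), neg_zero,
    map_zero (sigma2 (k := k) M (i-1) D), add_zero] at hsp
  exact hsp.symm

lemma kd_sigma2 (i D : ℤ) (v : KT M n (i - 1) (D - 1)) :
    kd M a i D (sigma2 (k := k) M i D v)
      = sigma1 (k := k) M (i-1) D
          (ktcast (k := k) M rfl (show D - 1 + 1 = D by ring) (ktmul M (a 0) (i-1) (D-1) v))
        + sigma2 (k := k) M (i-1) D
            (-(kd M (fun s : Fin n => a s.succ) (i-1) (D-1) v)) := by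
  have hsp := sigma_pi (k := k) M (i-1) D (kd M a i D (sigma2 (k := k) M i D v))
  rw [pi1_kd, pi1_sigma2, map_zero (kd M (fun s : Fin n => a s.succ) i D), zero_add,
    pi2_sigma2, pi2_kd, pi2_sigma2] at hsp
  rw [← hsp]

lemma Fcyc_bdry (i D : ℤ) (x : LinearMap.ker (kd M a i D)) (hx : x ∈ kbdry M a i D) :
    Fcyc M a i D x ∈ kbdry M (fun s : Fin n => a s.succ) (i - 1) (D - 1) := by
  rw [mem_kbdry_iff] at hx ⊢
  obtain ⟨i', h, p, hp⟩ := hx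
  refine ⟨i' - 1, by omega, -(pi2 (k := k) M i' D p), ?_⟩
  rw [Fcyc_coe, ← hp, pi2_ktcast,
    map_neg (kd M (fun s : Fin n => a s.succ) (i'-1) (D-1)),
    map_neg (ktcast (k := k) M (show i' - 1 - 1 = i - 1 by omega) rfl)]
  have e1 := pi2_kd M a i' D p
  rw [e1, map_neg (ktcast (k := k) M _ _)]

lemma Hcyc_bdry (i D : ℤ) (u : LinearMap.ker (kd M (fun s : Fin n => a s.succ) i D))
    (hu : u ∈ kbdry M (fun s : Fin n => a s.succ) i D) :
    Hcyc M a i D u ∈ kbdry M a i D := by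
  rw [mem_kbdry_iff] at hu ⊢
  obtain ⟨i', h, p, hp⟩ := hu
  refine ⟨i', h, sigma1 (k := k) M i' D p, ?_⟩
  rw [Hcyc_coe, kd_sigma1, ← hp, sigma1_ktcast]

variable (hcomm : ∀ s t j, (a s (j + 1)).comp (a t j) = (a t (j + 1)).comp (a s j))

lemma Gcyc_bdry (i D : ℤ) (v : LinearMap.ker (kd M (fun s : Fin n => a s.succ) i (D - 1)))
    (hv : v ∈ kbdry M (fun s : Fin n => a s.succ) i (D - 1)) :
    Gcyc M a hcomm i D v ∈ kbdry M (fun s : Fin n => a s.succ) i D := by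
  rw [mem_kbdry_iff] at hv ⊢
  obtain ⟨i', h, p, hp⟩ := hv
  refine ⟨i', h,
    ktcast (k := k) M rfl (show D - 1 + 1 = D by ring) (ktmul M (a 0) i' (D-1) p), ?_⟩
  rw [Gcyc_coe, ← hp, ktmul_ktcast, kd_ktcast, kd_ktmul M a hcomm, ktcast_ktcast,
    ktcast_ktcast]

/-- The connecting homomorphism on Tor. -/
noncomputable def fmap (i D : ℤ) :
    TorP M a i D →ₗ[k] TorP M (fun s : Fin n => a s.succ) (i - 1) (D - 1) :=
  Submodule.mapQ _ _ (Fcyc M a i D) (fun x hx => Fcyc_bdry M a i D x hx)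

/-- The map on Tor induced by the inclusion of polynomial rings. -/
noncomputable def hmap (i D : ℤ) :
    TorP M (fun s : Fin n => a s.succ) i D →ₗ[k] TorP M a i D :=
  Submodule.mapQ _ _ (Hcyc M a i D) (fun u hu => Hcyc_bdry M a i D u hu)

/-- The map on Tor induced by multiplication by `x_0`. -/
noncomputable def gmap (i D : ℤ) :
    TorP M (fun s : Fin n => a s.succ) i (D - 1) →ₗ[k]
      TorP M (fun s : Fin n => a s.succ) i D :=
  Submodule.mapQ _ _ (Gcyc M a hcomm i D) (fun v hv => Gcyc_bdry M a hcomm i D v hv)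

lemma fmap_mk (i D : ℤ) (x : LinearMap.ker (kd M a i D)) :
    fmap M a i D (torproj M a i D x)
      = torproj M (fun s : Fin n => a s.succ) (i-1) (D-1) (Fcyc M a i D x) := by
  show Submodule.mapQ _ _ _ _ (Submodule.mkQ _ x) = Submodule.mkQ _ _
  rw [Submodule.mkQ_apply, Submodule.mkQ_apply, Submodule.mapQ_apply]

lemma hmap_mk (i D : ℤ) (u : LinearMap.ker (kd M (fun s : Fin n => a s.succ) i D)) :
    hmap M a i D (torproj M (fun s : Fin n => a s.succ) i D u)
      = torproj M a i D (Hcyc M a i D u) := by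
  show Submodule.mapQ _ _ _ _ (Submodule.mkQ _ u) = Submodule.mkQ _ _
  rw [Submodule.mkQ_apply, Submodule.mkQ_apply, Submodule.mapQ_apply]

lemma gmap_mk (i D : ℤ) (v : LinearMap.ker (kd M (fun s : Fin n => a s.succ) i (D - 1))) :
    gmap M a hcomm i D (torproj M (fun s : Fin n => a s.succ) i (D-1) v)
      = torproj M (fun s : Fin n => a s.succ) i D (Gcyc M a hcomm i D v) := by
  show Submodule.mapQ _ _ _ _ (Submodule.mkQ _ v) = Submodule.mkQ _ _
  rw [Submodule.mkQ_apply, Submodule.mkQ_apply, Submodule.mapQ_apply]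

lemma torproj_surjective {n : ℕ} (a : ∀ _ : Fin n, ∀ j, M j →ₗ[k] M (j + 1)) (i D : ℤ) :
    Function.Surjective (torproj M a i D) :=
  Submodule.mkQ_surjective _

lemma torproj_eq_zero_iff {n : ℕ} (a : ∀ _ : Fin n, ∀ j, M j →ₗ[k] M (j + 1)) (i D : ℤ)
    (x : LinearMap.ker (kd M a i D)) :
    torproj M a i D x = 0 ↔ x ∈ kbdry M a i D :=
  Submodule.Quotient.mk_eq_zero _

lemma torproj_eq_iff {n : ℕ} (a : ∀ _ : Fin n, ∀ j, M j →ₗ[k] M (j + 1)) (i D : ℤ)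
    (x y : LinearMap.ker (kd M a i D)) :
    torproj M a i D x = torproj M a i D y ↔ x - y ∈ kbdry M a i D :=
  Submodule.Quotient.eq _

end Aux5
section Aux6

variable {k : Type} [Field k] (M : ℤ → Type) [∀ j, AddCommGroup (M j)] [∀ j, Module k (M j)]
variable {n : ℕ} (a : ∀ _ : Fin (n + 1), ∀ j, M j →ₗ[k] M (j + 1))
variable (hcomm : ∀ s t j, (a s (j + 1)).comp (a t j) = (a t (j + 1)).comp (a s j))

lemma exact_fg (i D : ℤ) :
    Function.Exact (fmap M a i D) (gmap M a hcomm (i - 1) D) := by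
  intro y
  obtain ⟨x, rfl⟩ := torproj_surjective M (fun s : Fin n => a s.succ) (i-1) (D-1) y
  constructor
  · intro hg
    rw [gmap_mk, torproj_eq_zero_iff, mem_kbdry_iff] at hg
    obtain ⟨i', h, p, hp⟩ := hg
    rw [Gcyc_coe] at hp
    -- hp : ktcast h rfl (kd aS i' D p) = ktcast rfl hD (ktmul (i-1) (D-1) x.1)
    have hw : kd M a i D
        (sigma1 (k := k) M i D (-(ktcast (k := k) M (show i' = i by omega) rfl p))
          + sigma2 (k := k) M i D x.1) = 0 := by
      rw [map_add (kd M a i D), kd_sigma1, kd_sigma2, LinearMap.mem_ker.mp x.2, neg_zero,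
        map_zero (sigma2 (k := k) M (i-1) D), add_zero,
        map_neg (kd M (fun s : Fin n => a s.succ) i D), kd_ktcast, ← hp,
        ← map_add (sigma1 (k := k) M (i-1) D), neg_add_cancel,
        map_zero (sigma1 (k := k) M (i-1) D)]
    refine ⟨torproj M a i D ⟨_, LinearMap.mem_ker.mpr hw⟩, ?_⟩
    rw [fmap_mk]
    congr 1
    apply Subtype.ext
    rw [Fcyc_coe]
    show pi2 (k := k) M i D
      (sigma1 (k := k) M i D (-(ktcast (k := k) M (show i' = i by omega) rfl p))
        + sigma2 (k := k) M i D x.1) = x.1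
    rw [map_add (pi2 (k := k) M i D), pi2_sigma2, pi2_sigma1, zero_add]
  · rintro ⟨z, hz⟩
    obtain ⟨w, rfl⟩ := torproj_surjective M a i D z
    rw [← hz, fmap_mk, gmap_mk, torproj_eq_zero_iff, mem_kbdry_iff]
    refine ⟨i, rfl, -(pi1 (k := k) M i D w.1), ?_⟩
    have h0 := pi1_kd M a i D w.1
    rw [LinearMap.mem_ker.mp w.2, map_zero (pi1 (k := k) M (i-1) D)] at h0
    rw [ktcast_refl, map_neg (kd M (fun s : Fin n => a s.succ) i D), Gcyc_coe, Fcyc_coe]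
    exact neg_eq_of_add_eq_zero_right h0.symm
end Aux6
section Aux7

variable {k : Type} [Field k] (M : ℤ → Type) [∀ j, AddCommGroup (M j)] [∀ j, Module k (M j)]
variable {n : ℕ} (a : ∀ _ : Fin (n + 1), ∀ j, M j →ₗ[k] M (j + 1))
variable (hcomm : ∀ s t j, (a s (j + 1)).comp (a t j) = (a t (j + 1)).comp (a s j))

lemma exact_gh (i D : ℤ) :
    Function.Exact (gmap M a hcomm i D) (hmap M a i D) := by
  intro y
  obtain ⟨x, rfl⟩ := torproj_surjective M (fun s : Fin n => a s.succ) i D y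
  constructor
  · intro hh
    rw [hmap_mk, torproj_eq_zero_iff, mem_kbdry_iff] at hh
    obtain ⟨i', h, p, hp⟩ := hh
    rw [Hcyc_coe] at hp
    have hv0 : kd M (fun s : Fin n => a s.succ) (i'-1) (D-1) (pi2 (k := k) M i' D p) = 0 := by
      have h3 : pi2 (k := k) M i D (sigma1 (k := k) M i D x.1) = 0 := pi2_sigma1 M i D x.1
      rw [← hp, pi2_ktcast, ktcast_eq_zero_iff] at h3
      rw [← neg_eq_zero, ← pi2_kd]
      exact h3
    have hvcyc : kd M (fun s : Fin n => a s.succ) i (D-1)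
        (ktcast (k := k) M h rfl (pi2 (k := k) M i' D p)) = 0 := by
      rw [kd_ktcast, hv0, ktcast_zero]
    refine ⟨torproj M (fun s : Fin n => a s.succ) i (D-1) ⟨_, LinearMap.mem_ker.mpr hvcyc⟩, ?_⟩
    rw [gmap_mk, torproj_eq_iff, mem_kbdry_iff]
    refine ⟨i', h, -(pi1 (k := k) M i' D p), ?_⟩
    have h6 : (Gcyc M a hcomm i D ⟨_, LinearMap.mem_ker.mpr hvcyc⟩).1
        = ktcast (k := k) M h rfl (ktcast (k := k) M rfl (show D - 1 + 1 = D by ring)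
            (ktmul M (a 0) (i'-1) (D-1) (pi2 (k := k) M i' D p))) := by
      rw [Gcyc_coe]
      show ktcast (k := k) M rfl _ (ktmul M (a 0) i (D-1)
        (ktcast (k := k) M h rfl (pi2 (k := k) M i' D p))) = _
      rw [ktmul_ktcast, ktcast_ktcast, ktcast_ktcast]
    have h5 : ktcast (k := k) M h rfl
          (kd M (fun s : Fin n => a s.succ) i' D (pi1 (k := k) M i' D p))
        + ktcast (k := k) M h rfl (ktcast (k := k) M rfl (show D - 1 + 1 = D by ring)
            (ktmul M (a 0) (i'-1) (D-1) (pi2 (k := k) M i' D p))) = x.1 := by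
      have h5' : ktcast (k := k) M h rfl (pi1 (k := k) M (i'-1) D (kd M a i' D p)) = x.1 := by
        rw [← pi1_ktcast, hp, pi1_sigma1]
      rw [pi1_kd, map_add (ktcast (k := k) M h rfl)] at h5'
      exact h5'
    rw [map_neg (kd M (fun s : Fin n => a s.succ) i' D), map_neg (ktcast (k := k) M h rfl),
      Submodule.coe_sub, h6, ← h5]
    abel
  · rintro ⟨z, hz⟩
    obtain ⟨v, rfl⟩ := torproj_surjective M (fun s : Fin n => a s.succ) i (D-1) z
    rw [← hz, gmap_mk, hmap_mk, torproj_eq_zero_iff, mem_kbdry_iff]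
    refine ⟨i + 1, by ring, sigma2 (k := k) M (i+1) D
      (ktcast (k := k) M (show i = i + 1 - 1 by ring) rfl v.1), ?_⟩
    rw [Hcyc_coe, kd_sigma2, kd_ktcast, LinearMap.mem_ker.mp v.2, ktcast_zero, neg_zero,
      map_zero (sigma2 (k := k) M (i+1-1) D)]
    simp only [add_zero]
    rw [← sigma1_ktcast]
    congr 1
    rw [Gcyc_coe]
    simp only [ktmul_ktcast, ktcast_ktcast]

include hcomm in
lemma exact_hf (i D : ℤ) :
    Function.Exact (hmap M a i D) (fmap M a i D) := by
  intro y
  obtain ⟨x, rfl⟩ := torproj_surjective M a i D y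
  constructor
  · intro hf
    rw [fmap_mk, torproj_eq_zero_iff, mem_kbdry_iff] at hf
    obtain ⟨i', h, q0, hq⟩ := hf
    rw [Fcyc_coe] at hq
    have hA := pi1_kd M a i D x.1
    rw [LinearMap.mem_ker.mp x.2, map_zero (pi1 (k := k) M (i-1) D)] at hA
    have hB : kd M (fun s : Fin n => a s.succ) i D
        (ktcast (k := k) M rfl (show D - 1 + 1 = D by ring)
          (ktmul M (a 0) i (D-1) (ktcast (k := k) M (show i' = i by omega) rfl q0)))
        = ktcast (k := k) M rfl (show D - 1 + 1 = D by ring)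
            (ktmul M (a 0) (i-1) (D-1) (pi2 (k := k) M i D x.1)) := by
      rw [kd_ktcast, kd_ktmul M a hcomm, kd_ktcast, ← hq, ktmul_ktcast]
    have hu : kd M (fun s : Fin n => a s.succ) i D
        (pi1 (k := k) M i D x.1
          + ktcast (k := k) M rfl (show D - 1 + 1 = D by ring)
              (ktmul M (a 0) i (D-1) (ktcast (k := k) M (show i' = i by omega) rfl q0))) = 0 := by
      rw [map_add (kd M (fun s : Fin n => a s.succ) i D), hB]
      exact hA.symm
    refine ⟨torproj M (fun s : Fin n => a s.succ) i D ⟨_, LinearMap.mem_ker.mpr hu⟩, ?_⟩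
    rw [hmap_mk, torproj_eq_iff, mem_kbdry_iff]
    refine ⟨i + 1, by ring, sigma2 (k := k) M (i+1) D
      (ktcast (k := k) M (show i' = i + 1 - 1 by omega) rfl q0), ?_⟩
    rw [Submodule.coe_sub, Hcyc_coe, kd_sigma2, kd_ktcast,
      map_add (ktcast (k := k) M (show i + 1 - 1 = i by ring) rfl), ← sigma1_ktcast,
      ← sigma2_ktcast]
    simp only [ktcast_neg, ktcast_ktcast, ktmul_ktcast]
    rw [hq, map_neg (sigma2 (k := k) M i D)]
    rw [map_add (sigma1 (k := k) M i D)]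
    have hsp := sigma_pi (k := k) M i D x.1
    nth_rewrite 3 [← hsp]
    abel
  · rintro ⟨z, hz⟩
    obtain ⟨u, rfl⟩ := torproj_surjective M (fun s : Fin n => a s.succ) i D z
    have hzero : Fcyc M a i D (Hcyc M a i D u) = 0 := by
      apply Subtype.ext
      rw [Fcyc_coe, Hcyc_coe, ZeroMemClass.coe_zero]
      exact pi2_sigma1 M i D u.1
    rw [← hz, hmap_mk, fmap_mk, hzero,
      map_zero (torproj M (fun s : Fin n => a s.succ) (i-1) (D-1))]

end Aux7
set_option maxHeartbeats 1000000
set_option synthInstance.maxHeartbeats 1000000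

/-- (Mapping cone sequence.)  Let `M` be a graded module over
`R = k[x_0,…,x_N]` — encoded by its graded components together with the commuting
degree-one actions `a s` of the variables `x_0, …, x_N` — regarded also as a graded module
over `S = k[x_1,…,x_N]` (the actions `a s.succ`), and let `μ : M → M(1)` be multiplication
by `x_0` (the action `a 0`).  Then there is a long exact sequence of graded vector spaces
`⋯ → Tor_i^R(M,k)_D → Tor_{i-1}^S(M,k)_{D-1} → Tor_{i-1}^S(M,k)_D → Tor_{i-1}^R(M,k)_D → ⋯`
in which the middle map is induced by multiplication by `x_0`.
(Here `Tor_i^R(M,k)_{i+j}` for `D = i + j` matches the paper's indexing.) -/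
theorem mapping_cone_sequence {k : Type} [Field k] (n : ℕ)
    (M : ℤ → Type) [∀ j, AddCommGroup (M j)] [∀ j, Module k (M j)]
    (a : ∀ _ : Fin (n + 1), ∀ j : ℤ, M j →ₗ[k] M (j + 1))
    (hcomm : ∀ s t j, (a s (j + 1)).comp (a t j) = (a t (j + 1)).comp (a s j))
    (D : ℤ) :
    ∃ (f : ∀ i : ℤ, TorP M a i D →ₗ[k] TorP M (fun s : Fin n => a s.succ) (i - 1) (D - 1))
      (g : ∀ i : ℤ, TorP M (fun s : Fin n => a s.succ) i (D - 1) →ₗ[k]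
        TorP M (fun s : Fin n => a s.succ) i D)
      (h : ∀ i : ℤ, TorP M (fun s : Fin n => a s.succ) i D →ₗ[k] TorP M a i D),
      (∀ (i : ℤ) (z : KT M n i (D - 1))
          (hz : z ∈ LinearMap.ker (kd M (fun s : Fin n => a s.succ) i (D - 1)))
          (hz' : (ktcast (k := k) M rfl (show D - 1 + 1 = D by ring)) (ktmul M (a 0) i (D - 1) z) ∈
            LinearMap.ker (kd M (fun s : Fin n => a s.succ) i D)),
        g i (torproj M (fun s : Fin n => a s.succ) i (D - 1) ⟨z, hz⟩) =
          torproj M (fun s : Fin n => a s.succ) i D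
            ⟨(ktcast (k := k) M rfl (show D - 1 + 1 = D by ring)) (ktmul M (a 0) i (D - 1) z), hz'⟩) ∧
      (∀ i : ℤ, Function.Exact (f i) (g (i - 1))) ∧
      (∀ i : ℤ, Function.Exact (g i) (h i)) ∧
      (∀ i : ℤ, Function.Exact (h i) (f i)) := by
  refine ⟨fun i => fmap M a i D, fun i => gmap M a hcomm i D, fun i => hmap M a i D,
    ?_, fun i => exact_fg M a hcomm i D, fun i => exact_gh M a hcomm i D,
    fun i => exact_hf M a hcomm i D⟩
  intro i z hz hz'
  rw [gmap_mk]
  congr 1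
end
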